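/- Let X ∈ ℝ^{n×d} have linearly independent rows, θ₀, θ* ∈ ℝ^d, z ∈ ℝ^n, and Σ ∈ ℝ^{d×d} positive semidefinite. Define P∥ := Xᵀ(XXᵀ)⁻¹X, P⊥ := I − P∥, and θ_GD := P∥ θ* + P⊥ θ₀ + Xᵀ(XXᵀ)⁻¹ z. Then ‖Σ^{1/2}(θ* − θ_GD)‖₂² ≤ 2 ‖Σ − (1/n) XᵀX‖₂ · ‖θ* − θ₀‖₂² + 2 ‖Σ^{1/2} Xᵀ (X Xᵀ)⁻¹ z‖₂². -/

import Mathlib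

/-!
Since `θ* − θ_GD = P⊥(θ* − θ₀) − Xᵀ(XXᵀ)⁻¹z`, the inequality `(a − b)² ≤ 2a² + 2b²` splits the
risk into a bias and a noise term. The vector `u = P⊥(θ* − θ₀)` lies in the kernel of `X`, so
`uᵀΣu = uᵀ(Σ − XᵀX/n)u ≤ ‖Σ − XᵀX/n‖₂ ‖u‖²`, and `‖u‖ ≤ ‖θ* − θ₀‖` because `P⊥` is an orthogonal
projection.
-/

open Matrix

/-- Spectral norm (largest singular value) of a matrix, as the operator norm of the
induced linear map between Euclidean spaces. -/
noncomputable def specNorm {d₁ d₂ : ℕ} (M : Matrix (Fin d₁) (Fin d₂) ℝ) : ℝ :=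
  ‖LinearMap.toContinuousLinearMap (Matrix.toEuclideanLin M)‖

open scoped ComplexOrder

/-- The positive semidefinite square root of a positive semidefinite matrix, as defined in the
older Mathlib (`Matrix.PosSemidef.sqrt`, since removed). -/
noncomputable def Matrix.PosSemidef.sqrt {n 𝕜 : Type*} [Fintype n] [RCLike 𝕜] [DecidableEq n]
    {A : Matrix n n 𝕜} (hA : A.PosSemidef) : Matrix n n 𝕜 :=
  hA.1.eigenvectorUnitary.1 * diagonal ((↑) ∘ (√·) ∘ hA.1.eigenvalues) *
  (star hA.1.eigenvectorUnitary : Matrix n n 𝕜)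

namespace Matrix

variable {m n : Type*} [Fintype m] [Fintype n]

lemma sum_sq_eq_dotProduct_self {R : Type*} [CommSemiring R] (v : n → R) :
    ∑ i, v i ^ 2 = v ⬝ᵥ v := by
  simp only [dotProduct, sq]

lemma mulVec_dotProduct_mulVec_self {R : Type*} [CommSemiring R] (Q : Matrix m n R)
    (w : n → R) : (Q *ᵥ w) ⬝ᵥ (Q *ᵥ w) = w ⬝ᵥ ((Qᵀ * Q) *ᵥ w) := by
  rw [dotProduct_mulVec, ← mulVec_transpose, mulVec_mulVec, dotProduct_comm]

section LinearOrderedCommRing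

variable {R : Type*} [CommRing R] [LinearOrder R] [IsStrictOrderedRing R]

lemma dotProduct_self_nonneg (v : n → R) : 0 ≤ v ⬝ᵥ v :=
  Fintype.sum_nonneg fun i => mul_self_nonneg (v i)

lemma sub_dotProduct_sub_le (a b : n → R) :
    (a - b) ⬝ᵥ (a - b) ≤ 2 * (a ⬝ᵥ a) + 2 * (b ⬝ᵥ b) := by
  have := dotProduct_self_nonneg (a + b)
  simp only [sub_dotProduct, dotProduct_sub, add_dotProduct, dotProduct_add,
    dotProduct_comm b a] at this ⊢
  linarith

lemma mulVec_dotProduct_mulVec_self_le {Q : Matrix n n R} (hsymm : Q.IsSymm)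
    (hidem : IsIdempotentElem Q) (w : n → R) : (Q *ᵥ w) ⬝ᵥ (Q *ᵥ w) ≤ w ⬝ᵥ w := by
  have hQQ : (Q *ᵥ w) ⬝ᵥ (Q *ᵥ w) = w ⬝ᵥ (Q *ᵥ w) := by
    rw [mulVec_dotProduct_mulVec_self, hsymm.eq, hidem.eq]
  have := dotProduct_self_nonneg (w - Q *ᵥ w)
  simp only [sub_dotProduct, dotProduct_sub, dotProduct_comm _ w] at this
  linarith

end LinearOrderedCommRing

lemma isUnit_mul_transpose_of_linearIndependent [DecidableEq m] {X : Matrix m n ℝ}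
    (hX : LinearIndependent ℝ X.row) : IsUnit (X * Xᵀ) := by
  rw [← vecMul_injective_iff_isUnit, ← coe_vecMulLinear, ← LinearMap.ker_eq_bot,
    LinearMap.ker_eq_bot']
  intro v hv
  have hvX : v ᵥ* X = 0 := by
    rwa [coe_vecMulLinear, ← conjTranspose_eq_transpose_of_trivial,
      vecMul_self_mul_conjTranspose_eq_zero] at hv
  exact vecMul_injective_iff.mpr hX (hvX.trans (zero_vecMul X).symm)

section RowSpaceProjection

variable {R : Type*} [CommRing R] [DecidableEq m]

lemma isSymm_transpose_mul_inv_mul (X : Matrix m n R) : (Xᵀ * (X * Xᵀ)⁻¹ * X).IsSymm := by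
  rw [IsSymm, transpose_mul, transpose_mul, transpose_nonsing_inv, transpose_mul,
    transpose_transpose, Matrix.mul_assoc]

lemma mul_transpose_mul_inv_mul {X : Matrix m n R} (hX : IsUnit (X * Xᵀ).det) :
    X * (Xᵀ * (X * Xᵀ)⁻¹ * X) = X := by
  rw [← Matrix.mul_assoc, ← Matrix.mul_assoc, mul_nonsing_inv _ hX, Matrix.one_mul]

lemma isIdempotentElem_transpose_mul_inv_mul {X : Matrix m n R} (hX : IsUnit (X * Xᵀ).det) :
    IsIdempotentElem (Xᵀ * (X * Xᵀ)⁻¹ * X) := by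
  rw [IsIdempotentElem, Matrix.mul_assoc, mul_transpose_mul_inv_mul hX]

lemma mul_one_sub_transpose_mul_inv_mul [DecidableEq n] {X : Matrix m n R}
    (hX : IsUnit (X * Xᵀ).det) : X * (1 - Xᵀ * (X * Xᵀ)⁻¹ * X) = 0 := by
  rw [Matrix.mul_sub, Matrix.mul_one, mul_transpose_mul_inv_mul hX, sub_self]

end RowSpaceProjection

end Matrix

namespace Matrix.PosSemidef

variable {n 𝕜 : Type*} [Fintype n] [RCLike 𝕜] [DecidableEq n] {A : Matrix n n 𝕜}

lemma sqrt_isHermitian (hA : A.PosSemidef) : hA.sqrt.IsHermitian := by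
  refine isHermitian_mul_mul_conjTranspose _ (isHermitian_diagonal_of_self_adjoint _ ?_)
  ext i
  simp

lemma sqrt_mul_self (hA : A.PosSemidef) : hA.sqrt * hA.sqrt = A := by
  have hD : diagonal (((↑) ∘ (√·) ∘ hA.1.eigenvalues) : n → 𝕜) *
      diagonal ((↑) ∘ (√·) ∘ hA.1.eigenvalues) = diagonal (RCLike.ofReal ∘ hA.1.eigenvalues) := by
    rw [diagonal_mul_diagonal]
    congr 1
    funext i
    simp only [Function.comp_apply]
    rw [← RCLike.ofReal_mul, Real.mul_self_sqrt (hA.eigenvalues_nonneg i)]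
  conv_rhs => rw [hA.1.spectral_theorem, Unitary.conjStarAlgAut_apply]
  unfold Matrix.PosSemidef.sqrt
  rw [← hD]
  simp only [Matrix.mul_assoc]
  congr 2
  rw [← Matrix.mul_assoc (star _ : Matrix n n 𝕜), Unitary.coe_star_mul_self, Matrix.one_mul]

lemma sqrt_mulVec_dotProduct_self {S : Matrix n n ℝ} (hS : S.PosSemidef) (u : n → ℝ) :
    (hS.sqrt *ᵥ u) ⬝ᵥ (hS.sqrt *ᵥ u) = u ⬝ᵥ (S *ᵥ u) := by
  rw [mulVec_dotProduct_mulVec_self, ← conjTranspose_eq_transpose_of_trivial,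
    hS.sqrt_isHermitian.eq, hS.sqrt_mul_self]

end Matrix.PosSemidef

lemma dotProduct_mulVec_le_specNorm {d : ℕ} (M : Matrix (Fin d) (Fin d) ℝ) (u : Fin d → ℝ) :
    u ⬝ᵥ (M *ᵥ u) ≤ specNorm M * (u ⬝ᵥ u) := by
  set T := LinearMap.toContinuousLinearMap (Matrix.toEuclideanLin M)
  set U : EuclideanSpace ℝ (Fin d) := WithLp.toLp 2 u
  have hinner : u ⬝ᵥ (M *ᵥ u) = inner ℝ U (T U) := by
    simp [T, U, EuclideanSpace.inner_toLp_toLp, dotProduct_comm]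
  have hnorm : u ⬝ᵥ u = ‖U‖ * ‖U‖ := by
    rw [← real_inner_self_eq_norm_mul_norm, EuclideanSpace.inner_toLp_toLp, star_trivial]
  calc u ⬝ᵥ (M *ᵥ u) ≤ ‖U‖ * ‖T U‖ := hinner ▸ real_inner_le_norm U (T U)
    _ ≤ ‖U‖ * (‖T‖ * ‖U‖) := by gcongr; exact T.le_opNorm U
    _ = specNorm M * (u ⬝ᵥ u) := by rw [hnorm, specNorm]; ring

lemma Matrix.PosSemidef.sqrt_mulVec_dotProduct_self_le_specNorm {m d : ℕ}
    {S : Matrix (Fin d) (Fin d) ℝ} (hS : S.PosSemidef) {X : Matrix (Fin m) (Fin d) ℝ}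
    {u : Fin d → ℝ} (hXu : X *ᵥ u = 0) (c : ℝ) :
    (hS.sqrt *ᵥ u) ⬝ᵥ (hS.sqrt *ᵥ u) ≤ specNorm (S - c • (Xᵀ * X)) * (u ⬝ᵥ u) := by
  have hu : (S - c • (Xᵀ * X)) *ᵥ u = S *ᵥ u := by
    rw [sub_mulVec, smul_mulVec, ← mulVec_mulVec, hXu, mulVec_zero, smul_zero, sub_zero]
  rw [hS.sqrt_mulVec_dotProduct_self, ← hu]
  exact dotProduct_mulVec_le_specNorm _ u

/-- excess-risk decomposition for the gradient descent limit
`θ_GD = P∥θ* + P⊥θ₀ + Xᵀ(XXᵀ)⁻¹z` of over-parameterized least squares: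
`‖Σ^{1/2}(θ* − θ_GD)‖₂² ≤ 2‖Σ − (1/n)XᵀX‖₂ ‖θ* − θ₀‖₂² + 2‖Σ^{1/2}Xᵀ(XXᵀ)⁻¹z‖₂²`. -/
theorem stmt6 {n d : ℕ} (X : Matrix (Fin n) (Fin d) ℝ)
    (hX : LinearIndependent ℝ (fun i => X i))
    (θ₀ θs : Fin d → ℝ) (z : Fin n → ℝ)
    (S : Matrix (Fin d) (Fin d) ℝ) (hS : S.PosSemidef)
    (Ppar Pperp : Matrix (Fin d) (Fin d) ℝ)
    (hPpar : Ppar = Xᵀ * (X * Xᵀ)⁻¹ * X) (hPperp : Pperp = 1 - Ppar)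
    (θGD : Fin d → ℝ)
    (hθGD : θGD = Ppar *ᵥ θs + Pperp *ᵥ θ₀ + (Xᵀ * (X * Xᵀ)⁻¹) *ᵥ z) :
    ∑ i, ((hS.sqrt *ᵥ (θs - θGD)) i) ^ 2 ≤
      2 * specNorm (S - (n : ℝ)⁻¹ • (Xᵀ * X)) * ∑ i, (θs i - θ₀ i) ^ 2
        + 2 * ∑ i, ((hS.sqrt *ᵥ ((Xᵀ * (X * Xᵀ)⁻¹) *ᵥ z)) i) ^ 2 := by
  subst hθGD hPperp hPpar
  have hdet : IsUnit (X * Xᵀ).det :=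
    (isUnit_iff_isUnit_det _).mp (isUnit_mul_transpose_of_linearIndependent hX)
  set P := Xᵀ * (X * Xᵀ)⁻¹ * X
  set w := θs - θ₀
  set u := (1 - P) *ᵥ w
  set b := (Xᵀ * (X * Xᵀ)⁻¹) *ᵥ z
  have hdiff : θs - (P *ᵥ θs + (1 - P) *ᵥ θ₀ + b) = u - b := by
    simp only [u, w, sub_mulVec, one_mulVec, mulVec_sub]
    abel
  have hXu : X *ᵥ u = 0 := by
    rw [mulVec_mulVec, mul_one_sub_transpose_mul_inv_mul hdet, zero_mulVec]
  have hu : u ⬝ᵥ u ≤ w ⬝ᵥ w :=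
    mulVec_dotProduct_mulVec_self_le (isSymm_one.sub (isSymm_transpose_mul_inv_mul X))
      (isIdempotentElem_transpose_mul_inv_mul hdet).one_sub w
  rw [show ∑ i, (θs i - θ₀ i) ^ 2 = w ⬝ᵥ w from sum_sq_eq_dotProduct_self w,
    sum_sq_eq_dotProduct_self, sum_sq_eq_dotProduct_self, hdiff, mulVec_sub]
  calc _ ≤ 2 * ((hS.sqrt *ᵥ u) ⬝ᵥ (hS.sqrt *ᵥ u)) + 2 * ((hS.sqrt *ᵥ b) ⬝ᵥ (hS.sqrt *ᵥ b)) :=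
        sub_dotProduct_sub_le _ _
    _ ≤ 2 * (specNorm (S - (n : ℝ)⁻¹ • (Xᵀ * X)) * (u ⬝ᵥ u)) + _ := by
        gcongr; exact hS.sqrt_mulVec_dotProduct_self_le_specNorm hXu _
    _ ≤ 2 * (specNorm (S - (n : ℝ)⁻¹ • (Xᵀ * X)) * (w ⬝ᵥ w)) + _ := by
        gcongr; exact norm_nonneg _
    _ = _ := by ring
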